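/- Let q be a prime power, k a positive integer, R = M_k(F_q), and A = M_{k×ℓ}(F_q) the left R-module of k×ℓ matrices over F_q, where ℓ > k. Then there exist a positive integer n, an R-submodule C ⊆ A^n, and an injective R-linear map f : C → A^n such that for every a ∈ C and every b ∈ A one has #{i ∈ {1,…,n} : a_i = b} = #{i ∈ {1,…,n} : f(a)_i = b} (hence f is an swc_G-isometry for every subgroup G of Aut_R(A)), yet there is no permutation π of {1,…,n} and no g_1,…,g_n ∈ Aut_R(A) with f(a) = (g_1(a_{π(1)}),…,g_n(a_{π(n)})) for all a ∈ C. -/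

import Mathlib

/-!
Take the message space `M_{k×ℓ}(F)` itself and, for `t ∈ F`, the code whose coordinates are the
maps `X ↦ X B` for all `B ∈ M_ℓ(F)` with `tr B = t`. Since `ℓ > k`, every `X` kills a nonzero
column vector `u`, which gives `N = u vᵀ` with `X N = 0` and `tr N = 1`; the shift `B ↦ B + N`
then matches the coordinates of the codes for `t = 0` and `t = 1` value by value at every `X`.
Equal fibre counts at `0` force equal kernels, so the second code is an isometric image of the
first. But the first code has an identically zero coordinate (`B = 0`) and the second has none
(`k > 0`), while a monomial map carries identically zero coordinates to identically zero ones.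
-/

variable (F : Type) [Field F] [Fintype F] (k m : ℕ)

/-- The matrix module `M = M_{k×m}(F)` as a left module over `R = M_{k×k}(F)`
via matrix multiplication. -/
instance matSMul : SMul (Matrix (Fin k) (Fin k) F) (Matrix (Fin k) (Fin m) F) :=
  ⟨fun A X => A * X⟩

instance matModule : Module (Matrix (Fin k) (Fin k) F) (Matrix (Fin k) (Fin m) F) where
  one_smul X := Matrix.one_mul X
  mul_smul A B X := Matrix.mul_assoc A B X
  smul_zero A := Matrix.mul_zero A
  smul_add A X Y := Matrix.mul_add A X Y
  add_smul A B X := Matrix.add_mul A B X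
  zero_smul X := Matrix.zero_mul X

instance matTower :
    IsScalarTower F (Matrix (Fin k) (Fin k) F) (Matrix (Fin k) (Fin m) F) :=
  ⟨fun c A X => Matrix.smul_mul c A X⟩

noncomputable instance :
    Fintype (Submodule (Matrix (Fin k) (Fin k) F) (Matrix (Fin k) (Fin m) F)) :=
  Fintype.ofFinite _

/-- The dimension of an `R`-submodule `U ⊆ M`, i.e. `dim_{F_q}(U) / k`. -/
noncomputable def dimk
    (U : Submodule (Matrix (Fin k) (Fin k) F) (Matrix (Fin k) (Fin m) F)) : ℕ :=
  Module.finrank F (U.restrictScalars F) / k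

open Classical in
/-- `η_V(U) = (−1)^(dim V − dim U) · q^(binom(dim V − dim U, 2))` if `U ⊆ V`, else `0`. -/
noncomputable def etaV
    (V U : Submodule (Matrix (Fin k) (Fin k) F) (Matrix (Fin k) (Fin m) F)) : ℚ :=
  if U ≤ V then
    (-1 : ℚ) ^ (dimk F k m V - dimk F k m U) *
      (Fintype.card F : ℚ) ^ ((dimk F k m V - dimk F k m U).choose 2)
  else 0

def HasUnextendableIsometry (R A : Type*) [Ring R] [AddCommGroup A] [Module R A] (n : ℕ) :
    Prop :=
  ∃ C : Submodule R (Fin n → A), ∃ f : C →ₗ[R] (Fin n → A),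
    Function.Injective f ∧
    (∀ (a : C) (b : A), Nat.card {i : Fin n // (a : Fin n → A) i = b} =
      Nat.card {i : Fin n // f a i = b}) ∧
    ¬ ∃ (π : Equiv.Perm (Fin n)) (g : Fin n → (A ≃ₗ[R] A)),
      ∀ (a : C) (i : Fin n), f a i = (g i) ((a : Fin n → A) (π i))

theorem Finite.card_subtype_eq_card_iff {α : Type*} [Finite α] {p : α → Prop} :
    Nat.card {a // p a} = Nat.card α ↔ ∀ a, p a := by
  refine ⟨fun h a => ?_, fun h => Nat.card_congr (Equiv.subtypeUnivEquiv h)⟩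
  by_contra ha
  exact (Finite.card_subtype_lt ha).ne h

section Coordinates

variable {R M A : Type*} [Ring R] [AddCommGroup M] [Module R M] [AddCommGroup A] [Module R A]

theorem hasUnextendableIsometry_of_coordinates {n : ℕ} {c c' : Fin n → M →ₗ[R] A}
    (hcount : ∀ x b, Nat.card {i // c i x = b} = Nat.card {i // c' i x = b})
    (hzero : ∃ i, c i = 0) (hne : ∀ i, c' i ≠ 0) :
    HasUnextendableIsometry R A n := by
  set φ := LinearMap.pi c
  set ψ := LinearMap.pi c'
  have hker : LinearMap.ker φ = LinearMap.ker ψ := by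
    ext x
    simp only [LinearMap.mem_ker, funext_iff, φ, ψ, LinearMap.pi_apply, Pi.zero_apply]
    rw [← Finite.card_subtype_eq_card_iff, ← Finite.card_subtype_eq_card_iff, hcount]
  let f : LinearMap.range φ →ₗ[R] (Fin n → A) :=
    (LinearMap.ker φ).liftQ ψ hker.le ∘ₗ φ.quotKerEquivRange.symm.toLinearMap
  have hf : ∀ x, f ⟨φ x, LinearMap.mem_range_self φ x⟩ = ψ x := fun x => by
    simp [f]
  refine ⟨LinearMap.range φ, f, ?_, ?_, ?_⟩
  · exact (LinearMap.ker_eq_bot.mp (Submodule.ker_liftQ_eq_bot _ ψ hker.le hker.ge)).comp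
      φ.quotKerEquivRange.symm.injective
  · rintro ⟨_, x, rfl⟩ b
    rw [hf]
    exact hcount x b
  · rintro ⟨π, g, hg⟩
    obtain ⟨i, hi⟩ := hzero
    refine hne (π.symm i) (LinearMap.ext fun x => ?_)
    have := hg ⟨φ x, LinearMap.mem_range_self φ x⟩ (π.symm i)
    rw [hf] at this
    simpa [φ, ψ, hi] using this

theorem exists_hasUnextendableIsometry_of_coordinates {ι ι' : Type*} [Finite ι] [Finite ι']
    {c : ι → M →ₗ[R] A} {c' : ι' → M →ₗ[R] A}
    (hcount : ∀ x b, Nat.card {i // c i x = b} = Nat.card {i // c' i x = b})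
    (hzero : ∃ i, c i = 0) (hne : ∀ i, c' i ≠ 0) :
    ∃ n, 0 < n ∧ HasUnextendableIsometry R A n := by
  obtain ⟨i, hi⟩ := hzero
  have hcard : Nat.card ι = Nat.card ι' := by simpa using hcount 0 0
  let e := Finite.equivFin ι
  let e' := (Finite.equivFin ι').trans (finCongr hcard.symm)
  refine ⟨Nat.card ι, Nat.card_pos_iff.mpr ⟨⟨i⟩, ‹_›⟩,
    hasUnextendableIsometry_of_coordinates (c := c ∘ e.symm) (c' := c' ∘ e'.symm)
      (fun x b => ?_) ⟨e i, by simp [hi]⟩ fun j => hne _⟩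
  calc Nat.card {j // c (e.symm j) x = b}
      = Nat.card {i // c i x = b} := Nat.card_congr (e.symm.subtypeEquiv fun _ => Iff.rfl)
    _ = Nat.card {i // c' i x = b} := hcount x b
    _ = Nat.card {j // c' (e'.symm j) x = b} :=
      Nat.card_congr (e'.subtypeEquiv fun _ => by simp)

end Coordinates

namespace Matrix

theorem exists_mul_ne_zero {R m n p : Type*} [Semiring R] [Fintype n] [Nonempty m]
    {B : Matrix n p R} (hB : B ≠ 0) : ∃ X : Matrix m n R, X * B ≠ 0 := by
  classical
  obtain ⟨i, j, hij⟩ : ∃ i j, B i j ≠ 0 := by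
    by_contra! h
    exact hB (ext h)
  refine ⟨single (Classical.arbitrary m) i 1, fun h => hij ?_⟩
  simpa using congr_fun₂ h (Classical.arbitrary m) j

variable {K : Type*} [Field K] {m n : Type*} [Fintype m] [Fintype n]

theorem exists_mul_eq_zero_trace_eq_one (h : Fintype.card m < Fintype.card n)
    (X : Matrix m n K) : ∃ N : Matrix n n K, X * N = 0 ∧ N.trace = 1 := by
  classical
  obtain ⟨u, hu, hu0⟩ := (Submodule.ne_bot_iff _).mp
    (LinearMap.ker_ne_bot_of_finrank_lt (f := X.mulVecLin) (by simpa using h))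
  obtain ⟨j, hj⟩ := Function.ne_iff.mp hu0
  refine ⟨vecMulVec u (Pi.single j (u j)⁻¹), ?_, ?_⟩
  · rw [mul_vecMulVec, show X *ᵥ u = 0 from hu, zero_vecMulVec]
  · rw [trace_vecMulVec, dotProduct_single, mul_inv_cancel₀ hj]

theorem card_mul_eq_trace_zero_eq_trace_one
    (h : Fintype.card m < Fintype.card n) (X b : Matrix m n K) :
    Nat.card {B : {B : Matrix n n K // B.trace = 0} // X * B.1 = b} =
      Nat.card {B : {B : Matrix n n K // B.trace = 1} // X * B.1 = b} := by
  obtain ⟨N, hXN, hN⟩ := exists_mul_eq_zero_trace_eq_one h X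
  refine Nat.card_congr (((Equiv.addRight N).subtypeEquiv fun B => ?_).subtypeEquiv fun B => ?_)
  · simp [trace_add, hN]
  · change _ ↔ X * (B.1 + N) = b
    rw [Matrix.mul_add, hXN, add_zero]

end Matrix

def matMulRight {K : Type} [Field K] (k : ℕ) {l : ℕ} (B : Matrix (Fin l) (Fin l) K) :
    Matrix (Fin k) (Fin l) K →ₗ[Matrix (Fin k) (Fin k) K] Matrix (Fin k) (Fin l) K where
  toFun X := X * B
  map_add' X Y := Matrix.add_mul X Y B
  map_smul' Y X := Matrix.mul_assoc Y X B

theorem matMulRight_ne_zero {K : Type} [Field K] {k l : ℕ} (hk : 0 < k)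
    {B : Matrix (Fin l) (Fin l) K} (hB : B ≠ 0) : matMulRight k B ≠ 0 := by
  have : Nonempty (Fin k) := ⟨⟨0, hk⟩⟩
  obtain ⟨X, hX⟩ := Matrix.exists_mul_ne_zero (m := Fin k) hB
  exact fun h => hX (LinearMap.congr_fun h X)

theorem exists_unextendable_swcG_isometry (hk : 0 < k) (l : ℕ) (hl : l > k) :
    ∃ n : ℕ, 0 < n ∧
      ∃ C : Submodule (Matrix (Fin k) (Fin k) F) (Fin n → Matrix (Fin k) (Fin l) F),
        ∃ f : C →ₗ[Matrix (Fin k) (Fin k) F] (Fin n → Matrix (Fin k) (Fin l) F),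
          Function.Injective f ∧
          (∀ (a : C) (b : Matrix (Fin k) (Fin l) F),
            Nat.card {i : Fin n // (a : Fin n → Matrix (Fin k) (Fin l) F) i = b} =
              Nat.card {i : Fin n // f a i = b}) ∧
          ¬ ∃ (π : Equiv.Perm (Fin n))
              (g : Fin n →
                (Matrix (Fin k) (Fin l) F ≃ₗ[Matrix (Fin k) (Fin k) F] Matrix (Fin k) (Fin l) F)),
              ∀ (a : C) (i : Fin n),
                f a i = (g i) ((a : Fin n → Matrix (Fin k) (Fin l) F) (π i)) := by
  obtain ⟨n, hn, h⟩ := exists_hasUnextendableIsometry_of_coordinates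
    (c := fun B : {B : Matrix (Fin l) (Fin l) F // B.trace = 0} => matMulRight k B.1)
    (c' := fun B : {B : Matrix (Fin l) (Fin l) F // B.trace = 1} => matMulRight k B.1)
    (Matrix.card_mul_eq_trace_zero_eq_trace_one (by simpa using hl) (m := Fin k))
    ⟨⟨0, Matrix.trace_zero _ _⟩, LinearMap.ext Matrix.mul_zero⟩
    (fun B => matMulRight_ne_zero hk fun h => by simpa [h] using B.2)
  exact ⟨n, hn, h⟩
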